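/- arXiv:2310.20283 — 5 statements merged into one kernel-verified Lean document; each statement's English description precedes it below -/
import Mathlib

section
/- For every p with 0 < p < 1 there exists a constant c(p) depending only on p such that for every positive integer n, the total variation distance between the binomial distributions with parameters (n, p) and (n+1, p) satisfies ρ_TV(B_{n,p}, B_{n+1,p}) ≤ c(p)/√n. -/
open MeasureTheory ProbabilityTheory

/-- n-fold convolution power of a measure on ℝ (0-th power is the Dirac measure at 0). -/
noncomputable def convPow1 (F : Measure ℝ) : ℕ → Measure ℝ
  | 0 => Measure.dirac 0
  | (n + 1) => (convPow1 F n).conv F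

/-- Kolmogorov (uniform) distance between measures on ℝ -/
noncomputable def kolm (F G : Measure ℝ) : ℝ :=
  ⨆ x : ℝ, |(F (Set.Iic x)).toReal - (G (Set.Iic x)).toReal|

/-- the binomial distribution with parameters n, p, as a measure on ℝ -/
noncomputable def binom (n : ℕ) (p : ℝ) : Measure ℝ :=
  ∑ k ∈ Finset.range (n + 1),
    (ENNReal.ofReal ((n.choose k : ℝ) * p ^ k * (1 - p) ^ (n - k))) • Measure.dirac (k : ℝ)

/-- total variation distance between measures on ℝ -/
noncomputable def rhoTV1 (F G : Measure ℝ) : ℝ :=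
  ⨆ A : {A : Set ℝ // MeasurableSet A}, |(F A.1).toReal - (G A.1).toReal|

/-!
Pascal's rule `b_k(n+1,p) = (1-p) b_k(n,p) + p b_{k-1}(n,p)` (that is, `B_{n+1,p}` is `B_{n,p}`
convolved with a Bernoulli law) gives, for every set `A`,
`B_{n,p}(A) - B_{n+1,p}(A) = p · ∑_{k ∈ A} (b_k(n,p) - b_{k-1}(n,p))`,
so the distance is at most `p` times the total variation of `k ↦ b_k(n,p)`. The weights increase
up to the mode `⌊(n+1)p⌋` and decrease after it, so this total variation is twice the largest
weight. Stirling's bounds on the three factorials in `C(n,m)`, together with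
`(np)^m (n(1-p))^(n-m) ≤ m^m (n-m)^(n-m)`, bound the largest weight by `2 / √(n p (1-p))`
once `n p (1-p) ≥ 2`.
-/

open Real Nat Finset Filter Stirling

lemma Finset.sum_range_abs_sub_of_unimodal (f : ℕ → ℝ) {M N : ℕ} (hMN : M ≤ N)
    (hup : ∀ k < M, f k ≤ f (k + 1)) (hdown : ∀ k, M ≤ k → f (k + 1) ≤ f k) :
    ∑ k ∈ range N, |f (k + 1) - f k| = 2 * f M - f 0 - f N := by
  induction N, hMN using Nat.le_induction with
  | base =>
    rw [sum_congr rfl fun k hk => abs_of_nonneg (sub_nonneg.2 (hup k (mem_range.1 hk))),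
      sum_range_sub]
    ring
  | succ N hMN ih =>
    rw [sum_range_succ, ih, abs_of_nonpos (sub_nonpos.2 (hdown N hMN))]
    ring

lemma pow_le_pow_mul_exp_sub {a : ℝ} (ha : 0 ≤ a) (m : ℕ) :
    a ^ m ≤ m ^ m * exp (a - m) := by
  rcases Nat.eq_zero_or_pos m with rfl | hm
  · simpa using one_le_exp ha
  have hm' : (0 : ℝ) < m := by exact_mod_cast hm
  have h : a / m ≤ exp (a / m - 1) := by linarith [add_one_le_exp (a / m - 1)]
  calc a ^ m = m ^ m * (a / m) ^ m := by rw [div_pow]; field_simp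
    _ ≤ m ^ m * exp (a / m - 1) ^ m := by gcongr
    _ = m ^ m * exp (a - m) := by rw [← exp_nat_mul]; congr 2; field_simp

lemma pow_mul_pow_le_of_add_eq {a b : ℝ} (ha : 0 ≤ a) (hb : 0 ≤ b) {m r : ℕ}
    (h : a + b = m + r) : a ^ m * b ^ r ≤ (m : ℝ) ^ m * r ^ r :=
  calc a ^ m * b ^ r ≤ (m ^ m * exp (a - m)) * (r ^ r * exp (b - r)) :=
        mul_le_mul (pow_le_pow_mul_exp_sub ha m) (pow_le_pow_mul_exp_sub hb r) (by positivity)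
          (by positivity)
    _ = m ^ m * r ^ r := by
        rw [mul_mul_mul_comm, ← exp_add, show a - m + (b - r) = 0 by linarith, exp_zero, mul_one]

lemma factorial_le_stirling {n : ℕ} (hn : n ≠ 0) :
    (n ! : ℝ) ≤ exp 1 * √n * (n / exp 1) ^ n := by
  obtain ⟨m, rfl⟩ := Nat.exists_eq_succ_of_ne_zero hn
  have hseq : stirlingSeq (m + 1) ≤ exp 1 / √2 := by
    simpa [stirlingSeq_one] using stirlingSeq'_antitone (Nat.zero_le m)
  rw [stirlingSeq, div_le_iff₀ (by positivity)] at hseq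
  refine hseq.trans_eq ?_
  rw [sqrt_mul zero_le_two]
  field_simp

lemma two_pi_mul_sqrt_mul_le_factorial_mul_factorial (m r : ℕ) :
    2 * π * √(m * r) * ((m : ℝ) ^ m * r ^ r / exp 1 ^ (m + r)) ≤ (m ! : ℝ) * r ! := by
  have hsqrt : √(2 * π * m) * √(2 * π * r) = 2 * π * √(m * r) := by
    rw [← sqrt_mul (by positivity),
      show 2 * π * m * (2 * π * r) = (2 * π) ^ 2 * (m * r) by ring,
      sqrt_mul (by positivity), sqrt_sq (by positivity)]
  calc 2 * π * √(m * r) * ((m : ℝ) ^ m * r ^ r / exp 1 ^ (m + r))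
      = (√(2 * π * m) * (m / exp 1) ^ m) * (√(2 * π * r) * (r / exp 1) ^ r) := by
        rw [div_pow, div_pow, pow_add, ← hsqrt]; field_simp
    _ ≤ (m ! : ℝ) * r ! :=
        mul_le_mul (le_factorial_stirling m) (le_factorial_stirling r) (by positivity)
          (by positivity)

lemma factorial_add_mul_pow_mul_pow_le {p : ℝ} (hp0 : 0 ≤ p) (hp1 : p ≤ 1) {m r : ℕ}
    (hmr : m + r ≠ 0) :
    ((m + r) ! : ℝ) * (p ^ m * (1 - p) ^ r)
      ≤ exp 1 * √(m + r) * ((m : ℝ) ^ m * r ^ r / exp 1 ^ (m + r)) := by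
  have hq : 0 ≤ 1 - p := sub_nonneg.2 hp1
  calc ((m + r) ! : ℝ) * (p ^ m * (1 - p) ^ r)
      ≤ exp 1 * √(m + r) * ((m + r) / exp 1) ^ (m + r) * (p ^ m * (1 - p) ^ r) := by
        gcongr
        exact_mod_cast factorial_le_stirling hmr
    _ = exp 1 * √(m + r) * (((m + r) * p) ^ m * ((m + r) * (1 - p)) ^ r / exp 1 ^ (m + r)) := by
        rw [div_pow, mul_pow, mul_pow, pow_add]; ring
    _ ≤ exp 1 * √(m + r) * ((m : ℝ) ^ m * r ^ r / exp 1 ^ (m + r)) := by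
        gcongr exp 1 * √(m + r) * (?_ / _)
        exact pow_mul_pow_le_of_add_eq (by positivity) (by positivity) (by ring)

lemma exists_le_div_sqrt_of_eventually {f : ℕ → ℝ} {B C : ℝ} (hB : 0 ≤ B)
    (hf : ∀ n, f n ≤ B) (hev : ∀ᶠ n in atTop, f n ≤ C / √n) :
    ∃ c, ∀ n, 0 < n → f n ≤ c / √n := by
  obtain ⟨N, hN⟩ := eventually_atTop.1 hev
  refine ⟨max C (B * √N), fun n hn => ?_⟩
  have hsn : 0 < √n := sqrt_pos.2 (by exact_mod_cast hn)
  rcases le_or_gt N n with hNn | hnN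
  · exact (hN n hNn).trans (div_le_div_of_nonneg_right (le_max_left _ _) hsn.le)
  · calc f n ≤ B := hf n
      _ = B * √n / √n := (mul_div_cancel_right₀ B hsn.ne').symm
      _ ≤ B * √N / √n := by gcongr
      _ ≤ max C (B * √N) / √n := by gcongr; exact le_max_right _ _

noncomputable def binomWeight (n : ℕ) (p : ℝ) (k : ℕ) : ℝ :=
  n.choose k * p ^ k * (1 - p) ^ (n - k)

section BinomWeight

variable {n k : ℕ} {p : ℝ}

lemma binomWeight_nonneg (hp0 : 0 ≤ p) (hp1 : p ≤ 1) : 0 ≤ binomWeight n p k := by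
  have : 0 ≤ 1 - p := sub_nonneg.2 hp1
  unfold binomWeight; positivity

lemma binomWeight_of_lt (h : n < k) : binomWeight n p k = 0 := by
  simp [binomWeight, Nat.choose_eq_zero_of_lt h]

lemma sum_binomWeight (n : ℕ) (p : ℝ) : ∑ k ∈ range (n + 1), binomWeight n p k = 1 := by
  simpa [binomWeight, mul_comm, mul_assoc, mul_left_comm] using (add_pow p (1 - p) n).symm

lemma binomWeight_le_one (hp0 : 0 ≤ p) (hp1 : p ≤ 1) : binomWeight n p k ≤ 1 := by
  rcases le_or_gt k n with hk | hk
  · exact sum_binomWeight n p ▸ single_le_sum (f := binomWeight n p)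
      (fun _ _ => binomWeight_nonneg hp0 hp1) (mem_range.2 (Nat.lt_succ_of_le hk))
  · exact (binomWeight_of_lt hk).trans_le zero_le_one

lemma binomWeight_succ_zero : binomWeight (n + 1) p 0 = (1 - p) * binomWeight n p 0 := by
  simp [binomWeight, pow_succ, mul_comm]

lemma binomWeight_succ_succ :
    binomWeight (n + 1) p (k + 1) = (1 - p) * binomWeight n p (k + 1) + p * binomWeight n p k := by
  unfold binomWeight
  rw [Nat.choose_succ_succ, Nat.succ_sub_succ]
  rcases lt_or_ge k n with hk | hk
  · rw [show n - k = n - (k + 1) + 1 by omega]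
    push_cast; ring
  · rw [Nat.choose_eq_zero_of_lt (by omega : n < k + 1), Nat.sub_eq_zero_of_le hk]
    push_cast; ring

lemma succ_mul_binomWeight_succ (hk : k < n) :
    (k + 1) * (1 - p) * binomWeight n p (k + 1) = (n - k) * p * binomWeight n p k := by
  have hchoose : (n.choose (k + 1) : ℝ) * (k + 1) = n.choose k * (n - k) := by
    have := congrArg (Nat.cast : ℕ → ℝ) (Nat.choose_succ_right_eq n k)
    push_cast [Nat.cast_sub hk.le] at this
    exact this
  unfold binomWeight
  rw [show n - k = n - (k + 1) + 1 by omega]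
  linear_combination p ^ (k + 1) * (1 - p) ^ (n - (k + 1) + 1) * hchoose

lemma binomWeight_le_succ (hp0 : 0 ≤ p) (hp1 : p < 1) (h : (k + 1 : ℝ) ≤ (n + 1) * p) :
    binomWeight n p k ≤ binomWeight n p (k + 1) := by
  have hk : k < n := by
    have : (k : ℝ) < n := by nlinarith
    exact_mod_cast this
  have hratio := succ_mul_binomWeight_succ (p := p) hk
  have hw := binomWeight_nonneg (n := n) (k := k) hp0 hp1.le
  have hpos : 0 < (k + 1 : ℝ) * (1 - p) := by nlinarith
  have : (k + 1 : ℝ) * (1 - p) ≤ (n - k) * p := by nlinarith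
  nlinarith [mul_le_mul_of_nonneg_right this hw]

lemma binomWeight_succ_le (hp0 : 0 ≤ p) (hp1 : p < 1) (h : (n + 1) * p ≤ (k + 1 : ℝ)) :
    binomWeight n p (k + 1) ≤ binomWeight n p k := by
  rcases lt_or_ge k n with hk | hk
  · have hratio := succ_mul_binomWeight_succ (p := p) hk
    have hw := binomWeight_nonneg (n := n) (k := k) hp0 hp1.le
    have hpos : 0 < (k + 1 : ℝ) * (1 - p) := by nlinarith
    have : (n - k) * p ≤ (k + 1 : ℝ) * (1 - p) := by nlinarith
    nlinarith [mul_le_mul_of_nonneg_right this hw]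
  · rw [binomWeight_of_lt (by omega)]
    exact binomWeight_nonneg hp0 hp1.le

lemma sum_abs_binomWeight_succ_sub (hp0 : 0 ≤ p) (hp1 : p < 1) :
    ∑ k ∈ range (n + 1), |binomWeight n p (k + 1) - binomWeight n p k|
      = 2 * binomWeight n p ⌊(n + 1) * p⌋₊ - binomWeight n p 0 := by
  have hmode : 0 ≤ (n + 1) * p := by positivity
  have hle : ⌊(n + 1) * p⌋₊ ≤ n + 1 := Nat.floor_le_of_le (by push_cast; nlinarith)
  rw [sum_range_abs_sub_of_unimodal _ hle, binomWeight_of_lt (Nat.lt_succ_self n), sub_zero]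
  · intro k hk
    refine binomWeight_le_succ hp0 hp1 ?_
    exact_mod_cast (Nat.le_floor_iff hmode).1 hk
  · intro k hk
    refine binomWeight_succ_le hp0 hp1 ((Nat.lt_floor_add_one _).le.trans ?_)
    exact_mod_cast Nat.succ_le_succ hk

lemma binomWeight_add_mul_factorial_mul_factorial (m r : ℕ) :
    binomWeight (m + r) p m * ((m ! : ℝ) * r !) = ((m + r) ! : ℝ) * (p ^ m * (1 - p) ^ r) := by
  rw [binomWeight, Nat.add_sub_cancel_left, ← Nat.choose_mul_factorial_mul_factorial
    (Nat.le_add_right m r), Nat.add_sub_cancel_left]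
  push_cast; ring

lemma binomWeight_mul_sqrt_le (hp0 : 0 ≤ p) (hp1 : p ≤ 1) (m r : ℕ) :
    binomWeight (m + r) p m * √(m * r) ≤ √(m + r) := by
  rcases Nat.eq_zero_or_pos m with rfl | hm
  · simp
  rcases Nat.eq_zero_or_pos r with rfl | hr
  · simp
  set S : ℝ := m ^ m * r ^ r / exp 1 ^ (m + r)
  have hS : 0 < S := by positivity
  have hw := binomWeight_nonneg (n := m + r) (k := m) hp0 hp1
  have he : exp 1 ≤ 2 * π := by linarith [exp_one_lt_d9, pi_gt_three]
  have : binomWeight (m + r) p m * √(m * r) * (2 * π * S) ≤ √(m + r) * (2 * π * S) :=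
    calc binomWeight (m + r) p m * √(m * r) * (2 * π * S)
        = binomWeight (m + r) p m * (2 * π * √(m * r) * S) := by ring
      _ ≤ binomWeight (m + r) p m * ((m ! : ℝ) * r !) :=
          mul_le_mul_of_nonneg_left (two_pi_mul_sqrt_mul_le_factorial_mul_factorial m r) hw
      _ ≤ exp 1 * √(m + r) * S := binomWeight_add_mul_factorial_mul_factorial m r ▸
          factorial_add_mul_pow_mul_pow_le hp0 hp1 (by omega)
      _ ≤ √(m + r) * (2 * π * S) := by
          nlinarith [mul_nonneg (mul_nonneg (sqrt_nonneg ((m : ℝ) + r)) hS.le) (sub_nonneg.2 he)]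
  exact le_of_mul_le_mul_right this (by positivity)

lemma binomWeight_floor_le (hp0 : 0 ≤ p) (hp1 : p ≤ 1) (hn : 2 ≤ n * (p * (1 - p))) :
    binomWeight n p ⌊(n + 1) * p⌋₊ ≤ 2 / √(n * (p * (1 - p))) := by
  set M := ⌊(n + 1) * p⌋₊
  have hnp : 2 ≤ n * p := by nlinarith [mul_nonneg (mul_nonneg (Nat.cast_nonneg n) hp0) hp0]
  have hnq : 2 ≤ n * (1 - p) := by nlinarith [mul_nonneg (Nat.cast_nonneg n) (sq_nonneg (1 - p))]
  have hMlo : n * p / 2 ≤ (M : ℝ) := by linarith [Nat.sub_one_lt_floor ((n + 1 : ℝ) * p)]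
  have hMhi : (M : ℝ) ≤ (n + 1) * p := Nat.floor_le (by positivity)
  have hMn : M ≤ n := by exact_mod_cast (show (M : ℝ) ≤ n by linarith)
  obtain ⟨r, hr⟩ := Nat.exists_eq_add_of_le hMn
  have hnr : (n : ℝ) = M + r := by exact_mod_cast hr
  have hrlo : n * (1 - p) / 2 ≤ (r : ℝ) := by linarith
  have hweight := binomWeight_mul_sqrt_le hp0 hp1 M r
  rw [← hr, ← hnr] at hweight
  have hsqrt : √n * √(n * (p * (1 - p))) / 2 ≤ √(M * r) := by
    calc √n * √(n * (p * (1 - p))) / 2 = √((n * p / 2) * (n * (1 - p) / 2)) := by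
          rw [← sqrt_mul (Nat.cast_nonneg n),
            show n * p / 2 * (n * (1 - p) / 2) = (n * (n * (p * (1 - p)))) / 2 ^ 2 by ring,
            sqrt_div' _ (by positivity), sqrt_sq zero_le_two]
      _ ≤ √(M * r) := sqrt_le_sqrt (mul_le_mul hMlo hrlo (by positivity) (by positivity))
  have hw := binomWeight_nonneg (n := n) (k := M) hp0 hp1
  have hn0 : 0 < √n := sqrt_pos.2 (by nlinarith)
  have hX : 0 < √(n * (p * (1 - p))) := sqrt_pos.2 (by linarith)
  have hmain := (mul_le_mul_of_nonneg_left hsqrt hw).trans hweight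
  rw [le_div_iff₀ hX]
  refine le_of_mul_le_mul_left ?_ hn0
  linarith

lemma binom_apply_toReal (hp0 : 0 ≤ p) (hp1 : p ≤ 1) {A : Set ℝ} (hA : MeasurableSet A) :
    (binom n p A).toReal =
      ∑ k ∈ range (n + 1), binomWeight n p k * A.indicator 1 (k : ℝ) := by
  rw [binom, Measure.finsetSum_apply, ENNReal.toReal_sum]
  · refine sum_congr rfl fun k _ => ?_
    rw [Measure.smul_apply, Measure.dirac_apply' _ hA, smul_eq_mul, ENNReal.toReal_mul]
    change (ENNReal.ofReal (binomWeight n p k)).toReal * _ = _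
    rw [ENNReal.toReal_ofReal (binomWeight_nonneg hp0 hp1)]
    by_cases h : (k : ℝ) ∈ A <;> simp [h]
  · intro k _
    rw [Measure.smul_apply, smul_eq_mul]
    exact ENNReal.mul_ne_top ENNReal.ofReal_ne_top (measure_ne_top _ _)

lemma binom_sub_binom_succ (hp0 : 0 ≤ p) (hp1 : p ≤ 1) {A : Set ℝ} (hA : MeasurableSet A) :
    (binom n p A).toReal - (binom (n + 1) p A).toReal
      = p * (binomWeight n p 0 * A.indicator 1 0 + ∑ k ∈ range (n + 1),
          (binomWeight n p (k + 1) - binomWeight n p k) * A.indicator 1 ((k + 1 : ℕ) : ℝ)) := by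
  have hext : (binom n p A).toReal
      = ∑ k ∈ range (n + 2), binomWeight n p k * A.indicator 1 (k : ℝ) := by
    rw [sum_range_succ, binomWeight_of_lt (Nat.lt_succ_self n), zero_mul, add_zero,
      binom_apply_toReal hp0 hp1 hA]
  rw [hext, binom_apply_toReal hp0 hp1 hA, ← sum_sub_distrib, sum_range_succ']
  simp only [binomWeight_succ_succ, binomWeight_succ_zero, mul_add, mul_sum]
  push_cast
  rw [add_comm]
  congr 1
  · ring
  · exact sum_congr rfl fun k _ => by ring

lemma abs_binom_sub_binom_succ_le (hp0 : 0 ≤ p) (hp1 : p < 1) {A : Set ℝ}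
    (hA : MeasurableSet A) :
    |(binom n p A).toReal - (binom (n + 1) p A).toReal|
      ≤ 2 * p * binomWeight n p ⌊(n + 1) * p⌋₊ := by
  have hterm : ∀ a x : ℝ, |a * A.indicator 1 x| ≤ |a| := fun a x => by
    rw [abs_mul]
    refine mul_le_of_le_one_right (abs_nonneg a) ?_
    by_cases h : x ∈ A <;> simp [h]
  rw [binom_sub_binom_succ hp0 hp1.le hA, abs_mul, abs_of_nonneg hp0]
  calc p * |binomWeight n p 0 * A.indicator 1 0 + ∑ k ∈ range (n + 1),
          (binomWeight n p (k + 1) - binomWeight n p k) * A.indicator 1 ((k + 1 : ℕ) : ℝ)|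
      ≤ p * (binomWeight n p 0
          + ∑ k ∈ range (n + 1), |binomWeight n p (k + 1) - binomWeight n p k|) := by
        gcongr
        refine (abs_add_le _ _).trans (add_le_add ?_ ?_)
        · exact (hterm _ 0).trans_eq (abs_of_nonneg (binomWeight_nonneg hp0 hp1.le))
        · exact (abs_sum_le_sum_abs _ _).trans (sum_le_sum fun k _ => hterm _ _)
    _ = 2 * p * binomWeight n p ⌊(n + 1) * p⌋₊ := by
        rw [sum_abs_binomWeight_succ_sub hp0 hp1]; ring

lemma rhoTV1_binom_binom_succ_le (hp0 : 0 ≤ p) (hp1 : p < 1) :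
    rhoTV1 (binom n p) (binom (n + 1) p) ≤ 2 * p * binomWeight n p ⌊(n + 1) * p⌋₊ :=
  haveI : Nonempty {A : Set ℝ // MeasurableSet A} := ⟨⟨∅, .empty⟩⟩
  ciSup_le fun A => abs_binom_sub_binom_succ_le hp0 hp1 A.2

end BinomWeight

/-- For 0 < p < 1 there is c(p) with ρ_TV(B_{n,p}, B_{n+1,p}) ≤ c(p)/√n for all n ≥ 1. -/
theorem statement4 (p : ℝ) (hp0 : 0 < p) (hp1 : p < 1) :
    ∃ c : ℝ, ∀ n : ℕ, 0 < n → rhoTV1 (binom n p) (binom (n + 1) p) ≤ c / Real.sqrt n := by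
  have hpq : 0 < p * (1 - p) := mul_pos hp0 (sub_pos.2 hp1)
  refine exists_le_div_sqrt_of_eventually zero_le_two (C := 4 / √(p * (1 - p))) (fun n => ?_) ?_
  · refine (rhoTV1_binom_binom_succ_le hp0.le hp1).trans ?_
    nlinarith [binomWeight_le_one (n := n) (k := ⌊(n + 1) * p⌋₊) hp0.le hp1.le]
  · filter_upwards [(tendsto_natCast_atTop_atTop.atTop_mul_const hpq).eventually_ge_atTop 2]
      with n hn
    calc rhoTV1 (binom n p) (binom (n + 1) p)
        ≤ 2 * p * binomWeight n p ⌊(n + 1) * p⌋₊ := rhoTV1_binom_binom_succ_le hp0.le hp1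
      _ ≤ 2 * 1 * (2 / √(n * (p * (1 - p)))) := by
          gcongr
          · exact binomWeight_nonneg hp0.le hp1.le
          · exact binomWeight_floor_le hp0.le hp1.le hn
      _ = 4 / √(p * (1 - p)) / √n := by
          rw [sqrt_mul (Nat.cast_nonneg n)]; field_simp; norm_num
end

section
/- For every p with 0 < p < 1 and every positive integer n, the total variation distance between the binomial distributions B_{n,p} and B_{n+1,p} equals the Kolmogorov (uniform) distance between their cumulative distribution functions: ρ_TV(B_{n,p}, B_{n+1,p}) = sup_x |B_{n,p}((-∞,x]) − B_{n+1,p}((-∞,x])|. -/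
open MeasureTheory ProbabilityTheory

open scoped Classical

noncomputable def bb (p : ℝ) (n k : ℕ) : ℝ := (n.choose k : ℝ) * p ^ k * (1 - p) ^ (n - k)

lemma bb_nonneg {p : ℝ} (hp0 : 0 ≤ p) (hp1 : p ≤ 1) (n k : ℕ) : 0 ≤ bb p n k := by
  have h : (0:ℝ) ≤ 1 - p := by linarith
  unfold bb; positivity

lemma binom_apply {p : ℝ} (hp0 : 0 ≤ p) (hp1 : p ≤ 1) (n : ℕ) (A : Set ℝ) :
    ((binom n p) A).toReal
      = ∑ k ∈ Finset.filter (fun k : ℕ => (k:ℝ) ∈ A) (Finset.range (n+1)), bb p n k := by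
  have h1 : (binom n p) A = ∑ k ∈ Finset.range (n+1),
      (if (k:ℝ) ∈ A then ENNReal.ofReal (bb p n k) else 0) := by
    unfold binom
    rw [Measure.coe_finset_sum, Finset.sum_apply]
    refine Finset.sum_congr rfl fun k _ => ?_
    rw [Measure.smul_apply, Measure.dirac_apply, smul_eq_mul]
    by_cases h : (k:ℝ) ∈ A
    · simp [h, Set.indicator_of_mem, bb]
    · simp [h, Set.indicator_of_notMem, bb]
  rw [h1, ENNReal.toReal_sum, Finset.sum_filter]
  · refine Finset.sum_congr rfl fun k _ => ?_
    by_cases h : (k:ℝ) ∈ A <;>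
      simp [h, ENNReal.toReal_ofReal (bb_nonneg hp0 hp1 n k)]
  · intro k _; by_cases h : (k:ℝ) ∈ A <;> simp [h]

lemma bb_top (p : ℝ) (n : ℕ) : bb p n (n+1) = 0 := by
  simp [bb, Nat.choose_succ_self]

lemma bb_sum (p : ℝ) (n : ℕ) : ∑ k ∈ Finset.range (n+1), bb p n k = 1 := by
  have h := add_pow p (1-p) n
  have h2 : p + (1 - p) = 1 := by ring
  rw [h2, one_pow] at h
  exact (Finset.sum_congr rfl fun k _ => by unfold bb; ring).trans h.symm

lemma d_sum (p : ℝ) (n : ℕ) :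
    ∑ k ∈ Finset.range (n+2), (bb p n k - bb p (n+1) k) = 0 := by
  rw [Finset.sum_sub_distrib]
  have h1 : ∑ k ∈ Finset.range (n+2), bb p n k = 1 := by
    rw [Finset.sum_range_succ, bb_top, bb_sum]; ring
  rw [h1, bb_sum]; ring

lemma d_zero (p : ℝ) (n : ℕ) : bb p n 0 - bb p (n+1) 0 = p * (1-p)^n := by
  simp [bb]; ring

lemma d_succ (p : ℝ) (n j : ℕ) (hj : j ≤ n) :
    bb p n (j+1) - bb p (n+1) (j+1) = p * (bb p n (j+1) - bb p n j) := by
  rcases eq_or_lt_of_le hj with rfl | hj'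
  · have e1 : bb p j (j+1) = 0 := by simp [bb, Nat.choose_succ_self]
    have e2 : bb p (j+1) (j+1) = p^(j+1) := by simp [bb, Nat.sub_self]
    have e3 : bb p j j = p^j := by simp [bb, Nat.sub_self]
    rw [e1, e2, e3]; ring
  · obtain ⟨i, hi⟩ : ∃ i, n - j = i + 1 := ⟨n - j - 1, by omega⟩
    have h1 : n - (j+1) = i := by omega
    have h2 : n + 1 - (j+1) = i + 1 := by omega
    unfold bb
    rw [Nat.choose_succ_succ n j, h1, h2, hi]
    push_cast
    ring

lemma bb_step (p : ℝ) (n j : ℕ) (hj : j + 1 ≤ n) :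
    ((j:ℝ)+1) * (bb p n (j+1) - bb p n j)
      = (n.choose j : ℝ) * p^j * (1-p)^(n-(j+1)) * (((n:ℝ)+1)*p - ((j:ℝ)+1)) := by
  have hc : (n.choose (j+1) : ℝ) * ((j:ℝ)+1) = (n.choose j : ℝ) * ((n:ℝ) - (j:ℝ)) := by
    have h := Nat.choose_succ_right_eq n j
    have h' : ((n.choose (j+1) * (j+1) : ℕ) : ℝ) = ((n.choose j * (n - j) : ℕ) : ℝ) := by
      exact congrArg (fun t : ℕ => (t:ℝ)) h
    push_cast [Nat.cast_sub (by omega : j ≤ n)] at h'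
    linarith [h']
  obtain ⟨i, hi⟩ : ∃ i, n - j = i + 1 := ⟨n - j - 1, by omega⟩
  have h1 : n - (j+1) = i := by omega
  unfold bb
  rw [h1, hi]
  linear_combination (p^(j+1) * (1-p)^i) * hc

lemma diff_apply {p : ℝ} (hp0 : 0 ≤ p) (hp1 : p ≤ 1) (n : ℕ) (A : Set ℝ) :
    ((binom n p) A).toReal - ((binom (n+1) p) A).toReal
      = ∑ k ∈ Finset.filter (fun k : ℕ => (k:ℝ) ∈ A) (Finset.range (n+2)),
          (bb p n k - bb p (n+1) k) := by
  have h2 := binom_apply hp0 hp1 (n+1) A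
  rw [show n+1+1 = n+2 from rfl] at h2
  rw [binom_apply hp0 hp1 n A, h2, Finset.sum_sub_distrib]
  congr 1
  apply Finset.sum_subset
  · exact Finset.filter_subset_filter _ (Finset.range_subset_range.2 (by omega))
  · intro k hk hk'
    simp only [Finset.mem_filter, Finset.mem_range] at hk hk'
    have : k = n+1 := by
      by_contra hne
      exact hk' ⟨by omega, hk.2⟩
    rw [this]; exact bb_top p n

/-- For 0 < p < 1 and n ≥ 1, the total variation distance between B_{n,p} and B_{n+1,p}
coincides with the Kolmogorov distance. -/
theorem statement5 (p : ℝ) (hp0 : 0 < p) (hp1 : p < 1) (n : ℕ) (hn : 0 < n) :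
    rhoTV1 (binom n p) (binom (n + 1) p) = kolm (binom n p) (binom (n + 1) p) := by
  have hp0' : (0:ℝ) ≤ p := hp0.le
  have hp1' : p ≤ 1 := hp1.le
  have hq : (0:ℝ) ≤ 1 - p := by linarith
  classical
  set s := Finset.range (n+2) with hs
  set d : ℕ → ℝ := fun k => bb p n k - bb p (n+1) k with hd
  set m := ⌊((n:ℝ)+1)*p⌋₊ with hm
  have hr0 : (0:ℝ) ≤ ((n:ℝ)+1)*p := by positivity
  have hmn : m ≤ n := by
    have h1 : ((n:ℝ)+1)*p < ((n+1:ℕ):ℝ) := by push_cast; nlinarith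
    have := (Nat.floor_lt hr0).2 h1
    omega
  have hpos : ∀ k, k ≤ m → 0 ≤ d k := by
    intro k hk
    cases k with
    | zero =>
      show (0:ℝ) ≤ bb p n 0 - bb p (n+1) 0
      rw [d_zero]; positivity
    | succ j =>
      have hjn : j + 1 ≤ n := le_trans hk hmn
      have hle : ((j:ℝ)+1) ≤ ((n:ℝ)+1)*p := by
        have h1 : ((j+1 : ℕ):ℝ) ≤ (m : ℝ) := Nat.cast_le.2 hk
        have h2 : (m:ℝ) ≤ ((n:ℝ)+1)*p := Nat.floor_le hr0
        push_cast at h1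
        linarith
      have hstep := bb_step p n j hjn
      have hfac : (0:ℝ) ≤ (n.choose j : ℝ) * p^j * (1-p)^(n-(j+1)) := by positivity
      have hnn : 0 ≤ ((j:ℝ)+1) * (bb p n (j+1) - bb p n j) := by
        rw [hstep]; exact mul_nonneg hfac (by linarith)
      have hj1 : (0:ℝ) < (j:ℝ)+1 := by positivity
      have hbb : 0 ≤ bb p n (j+1) - bb p n j := by nlinarith
      show (0:ℝ) ≤ bb p n (j+1) - bb p (n+1) (j+1)
      rw [d_succ p n j (by omega)]
      exact mul_nonneg hp0' hbb
  have hneg : ∀ k, k ∈ s → m < k → d k ≤ 0 := by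
    intro k hk hmk
    rw [hs, Finset.mem_range] at hk
    obtain ⟨j, rfl⟩ : ∃ j, k = j + 1 := ⟨k-1, by omega⟩
    have hjn : j ≤ n := by omega
    show bb p n (j+1) - bb p (n+1) (j+1) ≤ 0
    rw [d_succ p n j hjn]
    have hbb : bb p n (j+1) - bb p n j ≤ 0 := by
      rcases Nat.lt_or_ge j n with hjlt | hjge
      · have hgt : ((n:ℝ)+1)*p < ((j:ℝ)+1) := by
          have := (Nat.floor_lt hr0).1 hmk
          push_cast at this; linarith
        have hstep := bb_step p n j (by omega)
        have hfac : (0:ℝ) ≤ (n.choose j : ℝ) * p^j * (1-p)^(n-(j+1)) := by positivity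
        have hnp : ((j:ℝ)+1) * (bb p n (j+1) - bb p n j) ≤ 0 := by
          rw [hstep]
          exact mul_nonpos_iff.mpr (Or.inl ⟨hfac, by linarith⟩)
        nlinarith [show (0:ℝ) < (j:ℝ)+1 by positivity]
      · have hj : j = n := by omega
        rw [hj]
        have e1 : bb p n (n+1) = 0 := bb_top p n
        have e2 : bb p n n = p^n := by simp [bb, Nat.sub_self]
        rw [e1, e2]
        have : (0:ℝ) ≤ p^n := by positivity
        linarith
    exact mul_nonpos_iff.mpr (Or.inl ⟨hp0', hbb⟩)
  set M := ∑ k ∈ s, max (d k) 0 with hM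
  have hM0 : 0 ≤ M := Finset.sum_nonneg fun k _ => le_max_right _ _
  have hub : ∀ T : Finset ℕ, T ⊆ s → ∑ k ∈ T, d k ≤ M := by
    intro T hT
    calc ∑ k ∈ T, d k ≤ ∑ k ∈ T, max (d k) 0 :=
          Finset.sum_le_sum fun k _ => le_max_left _ _
      _ ≤ M := Finset.sum_le_sum_of_subset_of_nonneg hT fun k _ _ => le_max_right _ _
  have habs : ∀ T : Finset ℕ, T ⊆ s → |∑ k ∈ T, d k| ≤ M := by
    intro T hT
    refine abs_le.2 ⟨?_, hub T hT⟩
    have h1 := hub (s \ T) Finset.sdiff_subset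
    have h2 : ∑ k ∈ s \ T, d k + ∑ k ∈ T, d k = ∑ k ∈ s, d k := Finset.sum_sdiff hT
    have h3 : ∑ k ∈ s, d k = 0 := d_sum p n
    linarith
  have hMeq : (∑ k ∈ Finset.filter (fun k : ℕ => (k:ℝ) ∈ Set.Iic ((m:ℕ):ℝ)) s, d k) = M := by
    rw [Finset.sum_filter, hM]
    refine Finset.sum_congr rfl fun k hk => ?_
    by_cases h : k ≤ m
    · have h' : (k:ℝ) ∈ Set.Iic ((m:ℕ):ℝ) := by
        simp only [Set.mem_Iic]; exact_mod_cast h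
      rw [if_pos h', max_eq_left (hpos k h)]
    · have h' : (k:ℝ) ∉ Set.Iic ((m:ℕ):ℝ) := by
        simp only [Set.mem_Iic, Nat.cast_le]; omega
      rw [if_neg h', max_eq_right (hneg k hk (by omega))]
  have hdiff : ∀ A : Set ℝ, ((binom n p) A).toReal - ((binom (n+1) p) A).toReal
      = ∑ k ∈ Finset.filter (fun k : ℕ => (k:ℝ) ∈ A) s, d k :=
    fun A => diff_apply hp0' hp1' n A
  set Cb := ∑ k ∈ s, |d k| with hCb
  have hCbd : ∀ A : Set ℝ, |((binom n p) A).toReal - ((binom (n+1) p) A).toReal| ≤ Cb := by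
    intro A
    rw [hdiff A]
    calc |∑ k ∈ Finset.filter (fun k : ℕ => (k:ℝ) ∈ A) s, d k|
        ≤ ∑ k ∈ Finset.filter (fun k : ℕ => (k:ℝ) ∈ A) s, |d k| :=
          Finset.abs_sum_le_sum_abs _ _
      _ ≤ Cb := Finset.sum_le_sum_of_subset_of_nonneg (Finset.filter_subset _ _)
          fun k _ _ => abs_nonneg _
  have hbddK : BddAbove (Set.range fun x : ℝ =>
      |((binom n p) (Set.Iic x)).toReal - ((binom (n+1) p) (Set.Iic x)).toReal|) := by
    refine ⟨Cb, ?_⟩; rintro y ⟨x, rfl⟩; exact hCbd _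
  have hbddT : BddAbove (Set.range fun A : {A : Set ℝ // MeasurableSet A} =>
      |((binom n p) A.1).toReal - ((binom (n+1) p) A.1).toReal|) := by
    refine ⟨Cb, ?_⟩; rintro y ⟨A, rfl⟩; exact hCbd _
  have hne : Nonempty {A : Set ℝ // MeasurableSet A} := ⟨⟨∅, MeasurableSet.empty⟩⟩
  have h1 : kolm (binom n p) (binom (n+1) p) ≤ rhoTV1 (binom n p) (binom (n+1) p) := by
    unfold kolm rhoTV1
    refine ciSup_le fun x => ?_
    exact le_ciSup_of_le hbddT ⟨Set.Iic x, measurableSet_Iic⟩ le_rfl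
  have h2 : rhoTV1 (binom n p) (binom (n+1) p) ≤ M := by
    unfold rhoTV1
    refine ciSup_le fun A => ?_
    rw [hdiff A.1]
    exact habs _ (Finset.filter_subset _ _)
  have h3 : M ≤ kolm (binom n p) (binom (n+1) p) := by
    unfold kolm
    have e : ((binom n p) (Set.Iic ((m:ℕ):ℝ))).toReal
        - ((binom (n+1) p) (Set.Iic ((m:ℕ):ℝ))).toReal = M := by
      rw [hdiff]; exact hMeq
    calc M = |M| := (abs_of_nonneg hM0).symm
      _ = |((binom n p) (Set.Iic ((m:ℕ):ℝ))).toReal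
          - ((binom (n+1) p) (Set.Iic ((m:ℕ):ℝ))).toReal| := by rw [e]
      _ ≤ _ := le_ciSup hbddK ((m:ℕ):ℝ)
  exact le_antisymm (h2.trans h3) h1
end

section
/- For every p with 0 < p < 1 and every positive integer n, the Kolmogorov distance between the binomial distributions B_{n,p} and B_{n+1,p} equals p times the largest point mass of B_{n,p}: ρ(B_{n,p}, B_{n+1,p}) = p · max_{0 ≤ k ≤ n} b_k(n,p). -/
open MeasureTheory ProbabilityTheory

/-! Since `B_{n+1,p} = (1-p) B_{n,p} + p (E_1 * B_{n,p})`, the masses satisfy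
`b_{k+1}(n+1,p) = (1-p) b_{k+1}(n,p) + p b_k(n,p)`, so the distribution functions differ by a
telescoping sum: `B_{n,p}(-∞,x] - B_{n+1,p}(-∞,x] = p b_{⌊x⌋}(n,p)` for `x ≥ 0`, and `0` for
`x < 0`. The supremum over `x` is therefore `p max_k b_k(n,p)`, attained at a mode of `B_{n,p}`. -/

namespace Binomial

noncomputable def binomMass (n : ℕ) (p : ℝ) (k : ℕ) : ℝ :=
  (n.choose k : ℝ) * p ^ k * (1 - p) ^ (n - k)

variable {n k : ℕ} {p : ℝ}

lemma binomMass_nonneg (hp0 : 0 ≤ p) (hp1 : p ≤ 1) (n k : ℕ) : 0 ≤ binomMass n p k := by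
  have : 0 ≤ 1 - p := by linarith
  unfold binomMass
  positivity

lemma binomMass_of_lt (h : n < k) : binomMass n p k = 0 := by
  simp [binomMass, Nat.choose_eq_zero_of_lt h]

lemma binomMass_succ_zero (n : ℕ) (p : ℝ) :
    binomMass (n + 1) p 0 = (1 - p) * binomMass n p 0 := by
  simp [binomMass, pow_succ, mul_comm]

lemma binomMass_succ_succ (n : ℕ) (p : ℝ) (k : ℕ) :
    binomMass (n + 1) p (k + 1) = (1 - p) * binomMass n p (k + 1) + p * binomMass n p k := by
  rcases le_or_gt (k + 1) n with h | h
  · obtain ⟨j, rfl⟩ := Nat.exists_eq_add_of_le h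
    simp only [binomMass, Nat.choose_succ_succ', Nat.cast_add,
      show k + 1 + j + 1 - (k + 1) = j + 1 by omega, show k + 1 + j - (k + 1) = j by omega,
      show k + 1 + j - k = j + 1 by omega]
    ring
  · simp only [binomMass, Nat.choose_succ_succ', Nat.choose_eq_zero_of_lt h, Nat.cast_add,
      Nat.succ_sub_succ]
    ring

lemma sum_range_ite_binomMass_sub_succ (n : ℕ) (p : ℝ) (N m : ℕ) :
    ∑ k ∈ Finset.range (N + 1),
        (if k ≤ m then binomMass n p k - binomMass (n + 1) p k else 0) =
      p * binomMass n p (min N m) := by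
  induction N with
  | zero =>
    rw [Finset.sum_range_one, if_pos m.zero_le, binomMass_succ_zero, min_eq_left m.zero_le]
    ring
  | succ N ih =>
    rw [Finset.sum_range_succ, ih]
    by_cases hN : N + 1 ≤ m
    · rw [if_pos hN, min_eq_left (by omega), min_eq_left hN, binomMass_succ_succ]
      ring
    · rw [if_neg hN, min_eq_right (by omega), min_eq_right (by omega), add_zero]

lemma binom_Iic_toReal (hp0 : 0 ≤ p) (hp1 : p ≤ 1) (n : ℕ) (x : ℝ) :
    (binom n p (Set.Iic x)).toReal =
      ∑ k ∈ Finset.range (n + 1), if (k : ℝ) ≤ x then binomMass n p k else 0 := by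
  have hterm : ∀ k : ℕ, ENNReal.ofReal (binomMass n p k) * Measure.dirac (k : ℝ) (Set.Iic x) =
      ENNReal.ofReal (if (k : ℝ) ≤ x then binomMass n p k else 0) := by
    intro k
    rw [Measure.dirac_apply' _ measurableSet_Iic]
    by_cases hk : (k : ℝ) ≤ x <;> simp [hk]
  simp only [binom, Measure.finsetSum_apply, Measure.smul_apply, smul_eq_mul]
  change (∑ k ∈ _, ENNReal.ofReal (binomMass n p k) * _).toReal = _
  rw [Finset.sum_congr rfl fun k _ => hterm k,
    ← ENNReal.ofReal_sum_of_nonneg fun k _ => by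
      split_ifs
      exacts [binomMass_nonneg hp0 hp1 n k, le_rfl],
    ENNReal.toReal_ofReal (Finset.sum_nonneg fun k _ => by
      split_ifs
      exacts [binomMass_nonneg hp0 hp1 n k, le_rfl])]

lemma binom_Iic_toReal_sub_succ (hp0 : 0 ≤ p) (hp1 : p ≤ 1) (n : ℕ) (x : ℝ) :
    (binom n p (Set.Iic x)).toReal - (binom (n + 1) p (Set.Iic x)).toReal =
      if 0 ≤ x then p * binomMass n p (min (n + 1) ⌊x⌋₊) else 0 := by
  have hextend : ∑ k ∈ Finset.range (n + 1), (if (k : ℝ) ≤ x then binomMass n p k else 0) =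
      ∑ k ∈ Finset.range (n + 1 + 1), if (k : ℝ) ≤ x then binomMass n p k else 0 := by
    rw [Finset.sum_range_succ _ (n + 1), binomMass_of_lt n.lt_succ_self, ite_self, add_zero]
  rw [binom_Iic_toReal hp0 hp1, binom_Iic_toReal hp0 hp1, hextend, ← Finset.sum_sub_distrib]
  split_ifs with hx
  · rw [← sum_range_ite_binomMass_sub_succ]
    refine Finset.sum_congr rfl fun k _ => ?_
    simp only [Nat.le_floor_iff hx]
    split_ifs <;> ring
  · refine Finset.sum_eq_zero fun k _ => ?_
    have : ¬ (k : ℝ) ≤ x := fun hk => hx ((Nat.cast_nonneg k).trans hk)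
    simp [this]

lemma binomMass_le_sup' (hp0 : 0 ≤ p) (hp1 : p ≤ 1) (n j : ℕ) :
    binomMass n p j ≤ (Finset.range (n + 1)).sup' Finset.nonempty_range_add_one (binomMass n p) := by
  rcases le_or_gt j n with h | h
  · exact Finset.le_sup' _ (Finset.mem_range.mpr (Nat.lt_succ_of_le h))
  · rw [binomMass_of_lt h]
    exact (binomMass_nonneg hp0 hp1 n 0).trans (Finset.le_sup' _ (by simp))

end Binomial

open Binomial in
theorem statement6_general (p : ℝ) (hp0 : 0 < p) (hp1 : p < 1) (n : ℕ) :
    kolm (binom n p) (binom (n + 1) p) =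
      p * (Finset.range (n + 1)).sup' Finset.nonempty_range_add_one
        (fun k => (n.choose k : ℝ) * p ^ k * (1 - p) ^ (n - k)) := by
  have hp0' := hp0.le
  have hp1' := hp1.le
  change kolm _ _ = p * (Finset.range (n + 1)).sup' _ (binomMass n p)
  obtain ⟨k₀, hk₀, hmax⟩ :=
    Finset.exists_mem_eq_sup' Finset.nonempty_range_add_one (binomMass n p)
  refine IsGreatest.csSup_eq ⟨⟨k₀, ?_⟩, ?_⟩
  · have hk₀n : k₀ ≤ n := Nat.lt_succ_iff.mp (Finset.mem_range.mp hk₀)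
    simp only [binom_Iic_toReal_sub_succ hp0' hp1', Nat.cast_nonneg, if_true, Nat.floor_natCast,
      min_eq_right (hk₀n.trans n.le_succ), hmax]
    exact abs_of_nonneg (mul_nonneg hp0' (binomMass_nonneg hp0' hp1' n k₀))
  · rintro _ ⟨x, rfl⟩
    have hle := fun j => mul_le_mul_of_nonneg_left (binomMass_le_sup' hp0' hp1' n j) hp0'
    simp only [binom_Iic_toReal_sub_succ hp0' hp1']
    split_ifs
    · rw [abs_of_nonneg (mul_nonneg hp0' (binomMass_nonneg hp0' hp1' n _))]
      exact hle _
    · simpa using (mul_nonneg hp0' (binomMass_nonneg hp0' hp1' n 0)).trans (hle 0)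

/-- ρ(B_{n,p}, B_{n+1,p}) = p · max_{0 ≤ k ≤ n} b_k(n,p). -/
theorem statement6 (p : ℝ) (hp0 : 0 < p) (hp1 : p < 1) (n : ℕ) (hn : 0 < n) :
    kolm (binom n p) (binom (n + 1) p) =
      p * (Finset.range (n + 1)).sup' Finset.nonempty_range_add_one
        (fun k => (n.choose k : ℝ) * p ^ k * (1 - p) ^ (n - k)) :=
  statement6_general p hp0 hp1 n
end

section
/- Let F be a Borel probability measure on R and let 0 < q < 1 be such that the point 0 is a q-quantile of F, i.e., F((-∞,0)) ≤ q and F((0,∞)) ≤ 1 − q. Then there exists an absolute constant c such that for all positive integers n, the Kolmogorov distance satisfies ρ(F^{*n}, F^{*(n+1)}) ≤ c/√(n · min{q, 1−q}). -/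
/-
If `0` is a `q`-quantile of `F`, then `F = q μ + (1 - q) ν` with `μ` carried by `(-∞, 0]` and `ν`
by `[0, ∞)` (the atom at `0` is shared between them). Expanding binomially, `F^{*n}` is the mixture
of the measures `μ^{*i} ∗ ν^{*j}`, `i + j = n`, with binomial weights, and
`F^{*(n+1)} = F^{*n} ∗ (q μ + (1 - q) ν)`. Convolving with `ν` can only lower a distribution
function and convolving with `μ` can only raise it, so at a fixed `x` the values
`G i j = (μ^{*i} ∗ ν^{*j})(-∞, x]` satisfy `G i (j+1) ≤ G i j ≤ G (i+1) j`. Hence the difference of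
the two distribution functions at `x` is at most the largest binomial weight times the telescoping
sum `∑ (G (i+1) j - G i (j+1)) ≤ 1`.

The binomial weight `C(n,k) q^k (1-q)^(n-k)` is the `k`-th Fourier coefficient of
`t ↦ (q e^{it} + 1 - q)^n`, whose modulus is at most `exp (-2 n q (1-q) t² / π²)` on `[-π, π]`;
the Gaussian integral bounds the weight by `√(π / (8 n q (1-q))) ≤ 1 / √(n min(q, 1-q))`.
-/

open MeasureTheory ProbabilityTheory

open Set Real
open Finset.HasAntidiagonal (antidiagonal)
open scoped ENNReal

namespace MeasureTheory.Measure

theorem finsetSum_conv {M : Type*} [AddMonoid M] [MeasurableSpace M] [MeasurableAdd₂ M]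
    {ι : Type*} (s : Finset ι) (m : ι → Measure M) (ν : Measure M) [SFinite ν] :
    (∑ i ∈ s, m i) ∗ ν = ∑ i ∈ s, m i ∗ ν := by
  ext t ht
  simp only [conv, finsetSum_apply, map_apply measurable_add ht,
    prod_apply (measurable_add ht), lintegral_finsetSum_measure]

theorem conv_Iic_eq_lintegral (ρ ν : Measure ℝ) [SFinite ν] (x : ℝ) :
    (ρ ∗ ν) (Iic x) = ∫⁻ a, ν (Iic (x - a)) ∂ρ := by
  rw [conv, map_apply measurable_add measurableSet_Iic,
    prod_apply (measurable_add measurableSet_Iic)]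
  congr! with a
  ext b
  simp [le_sub_iff_add_le']

theorem conv_Iic_mono_right (ρ : Measure ℝ) {ν₁ ν₂ : Measure ℝ} [SFinite ν₁] [SFinite ν₂]
    (h : ∀ y, ν₁ (Iic y) ≤ ν₂ (Iic y)) (x : ℝ) : (ρ ∗ ν₁) (Iic x) ≤ (ρ ∗ ν₂) (Iic x) := by
  simp only [conv_Iic_eq_lintegral]
  exact lintegral_mono fun a => h (x - a)

theorem conv_Iic_le_of_measure_Iio_eq_zero (ρ : Measure ℝ) [SFinite ρ] {ν : Measure ℝ}
    [IsZeroOrProbabilityMeasure ν] (hν : ν (Iio 0) = 0) (x : ℝ) : (ρ ∗ ν) (Iic x) ≤ ρ (Iic x) := by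
  conv_rhs => rw [← conv_dirac_zero ρ]
  refine conv_Iic_mono_right ρ (fun y => ?_) x
  by_cases hy : 0 ≤ y
  · simp [hy, prob_le_one]
  · exact (measure_mono_null (Iic_subset_Iio.2 (not_le.1 hy)) hν).le.trans zero_le

theorem le_conv_Iic_of_measure_Ioi_eq_zero (ρ : Measure ℝ) [SFinite ρ] {μ : Measure ℝ}
    [IsProbabilityMeasure μ] (hμ : μ (Ioi 0) = 0) (x : ℝ) : ρ (Iic x) ≤ (ρ ∗ μ) (Iic x) := by
  conv_lhs => rw [← conv_dirac_zero ρ]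
  refine conv_Iic_mono_right ρ (fun y => ?_) x
  by_cases hy : 0 ≤ y
  · have : μ (Iic 0) = 1 := by
      rw [← compl_Ioi, prob_compl_eq_one_iff measurableSet_Ioi]; exact hμ
    simpa [hy, ← this] using measure_mono (Iic_subset_Iic.2 hy)
  · simp [hy]

end MeasureTheory.Measure

instance sFinite_convPow1 (F : Measure ℝ) [SFinite F] (n : ℕ) : SFinite (convPow1 F n) := by
  induction n with
  | zero => unfold convPow1; infer_instance
  | succ n ih => unfold convPow1; infer_instance

instance isProbabilityMeasure_convPow1 (F : Measure ℝ) [IsProbabilityMeasure F] (n : ℕ) :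
    IsProbabilityMeasure (convPow1 F n) := by
  induction n with
  | zero => unfold convPow1; infer_instance
  | succ n ih => unfold convPow1; infer_instance

theorem convPow1_succ (F : Measure ℝ) (n : ℕ) : convPow1 F (n + 1) = convPow1 F n ∗ F := rfl

section Mixture

variable (μ ν : Measure ℝ) [SFinite ν]

theorem convPow1_conv_convPow1_conv_left [SFinite μ] (i j : ℕ) :
    (convPow1 μ i ∗ convPow1 ν j) ∗ μ = convPow1 μ (i + 1) ∗ convPow1 ν j := by
  rw [Measure.conv_assoc, Measure.conv_comm (convPow1 ν j), ← Measure.conv_assoc, convPow1_succ]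

theorem convPow1_conv_convPow1_conv_right (i j : ℕ) :
    (convPow1 μ i ∗ convPow1 ν j) ∗ ν = convPow1 μ i ∗ convPow1 ν (j + 1) := by
  rw [Measure.conv_assoc, convPow1_succ]

theorem sum_smul_conv_smul_add_smul [SFinite μ] (s : Finset (ℕ × ℕ)) (c : ℕ × ℕ → ℝ≥0∞)
    (a b : ℝ≥0∞) :
    (∑ ij ∈ s, c ij • (convPow1 μ ij.1 ∗ convPow1 ν ij.2)) ∗ (a • μ + b • ν) =
      ∑ ij ∈ s, c ij • (a • (convPow1 μ (ij.1 + 1) ∗ convPow1 ν ij.2) +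
        b • (convPow1 μ ij.1 ∗ convPow1 ν (ij.2 + 1))) := by
  rw [Measure.finsetSum_conv]
  refine Finset.sum_congr rfl fun ij _ => ?_
  rw [Measure.conv_smul_left, Measure.conv_add, Measure.conv_smul_right, Measure.conv_smul_right,
    convPow1_conv_convPow1_conv_left, convPow1_conv_convPow1_conv_right]

theorem convPow1_smul_add_smul [SFinite μ] (a b : ℝ≥0∞) (n : ℕ) :
    convPow1 (a • μ + b • ν) n = ∑ ij ∈ antidiagonal n,
      (n.choose ij.1 * a ^ ij.1 * b ^ ij.2) • (convPow1 μ ij.1 ∗ convPow1 ν ij.2) := by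
  induction n with
  | zero => simp [convPow1]
  | succ n ih =>
    set f : ℕ → ℕ → Measure ℝ := fun i j => (a ^ i * b ^ j) • (convPow1 μ i ∗ convPow1 ν j)
    have hf (m i j : ℕ) :
        ((m : ℝ≥0∞) * a ^ i * b ^ j) • (convPow1 μ i ∗ convPow1 ν j) = m • f i j := by
      rw [mul_assoc, mul_smul, Nat.cast_smul_eq_nsmul]
    rw [convPow1_succ, ih, sum_smul_conv_smul_add_smul]
    simp only [hf]
    rw [Finset.sum_antidiagonal_choose_succ_nsmul, add_comm, ← Finset.sum_add_distrib]
    refine Finset.sum_congr rfl fun ij hij => ?_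
    rw [Finset.HasAntidiagonal.mem_antidiagonal] at hij
    rw [← Nat.choose_symm_of_eq_add hij.symm, ← hf, ← hf, smul_add, smul_smul, smul_smul]
    congr 2 <;> ring

end Mixture

theorem sum_antidiagonal_sub {M : Type*} [AddCommGroup M] (G : ℕ → ℕ → M) (n : ℕ) :
    ∑ ij ∈ antidiagonal n, (G (ij.1 + 1) ij.2 - G ij.1 (ij.2 + 1)) =
      G (n + 1) 0 - G 0 (n + 1) := by
  induction n generalizing G with
  | zero => simp
  | succ n ih =>
    rw [Finset.Nat.sum_antidiagonal_succ, ih fun i j => G (i + 1) j]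
    abel

theorem abs_sum_antidiagonal_mul_sub_le {q B : ℝ} (hq0 : 0 ≤ q) (hq1 : q ≤ 1) (n : ℕ)
    (w G : ℕ → ℕ → ℝ) (hw0 : ∀ i j, 0 ≤ w i j) (hwB : ∀ ij ∈ antidiagonal n, w ij.1 ij.2 ≤ B)
    (hG_succ_right : ∀ i j, G i (j + 1) ≤ G i j) (hG_succ_left : ∀ i j, G i j ≤ G (i + 1) j)
    (hG0 : ∀ i j, 0 ≤ G i j) (hG1 : ∀ i j, G i j ≤ 1) :
    |∑ ij ∈ antidiagonal n, w ij.1 ij.2 * G ij.1 ij.2 -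
      ∑ ij ∈ antidiagonal n, w ij.1 ij.2 *
        (q * G (ij.1 + 1) ij.2 + (1 - q) * G ij.1 (ij.2 + 1))| ≤ B := by
  have hB : 0 ≤ B := (hw0 0 n).trans (hwB (0, n) (by simp))
  rw [← Finset.sum_sub_distrib]
  calc _ ≤ ∑ ij ∈ antidiagonal n, |w ij.1 ij.2 * G ij.1 ij.2 -
        w ij.1 ij.2 * (q * G (ij.1 + 1) ij.2 + (1 - q) * G ij.1 (ij.2 + 1))| :=
        Finset.abs_sum_le_sum_abs _ _
    _ ≤ ∑ ij ∈ antidiagonal n, B * (G (ij.1 + 1) ij.2 - G ij.1 (ij.2 + 1)) := by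
        refine Finset.sum_le_sum fun ij hij => ?_
        obtain ⟨i, j⟩ := ij
        have h₁ := hG_succ_right i j
        have h₂ := hG_succ_left i j
        rw [← mul_sub, abs_mul, abs_of_nonneg (hw0 i j)]
        -- `G i j` and the convex combination both lie in `[G i (j + 1), G (i + 1) j]`
        refine mul_le_mul (hwB _ hij) (abs_sub_le_iff.2 ⟨?_, ?_⟩) (abs_nonneg _) hB <;>
          nlinarith
    _ = B * (G (n + 1) 0 - G 0 (n + 1)) := by rw [← Finset.mul_sum, sum_antidiagonal_sub]
    _ ≤ B := mul_le_of_le_one_right hB (by linarith [hG1 (n + 1) 0, hG0 0 (n + 1)])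

theorem measureReal_finsetSum_apply {α ι : Type*} [MeasurableSpace α] (s : Finset ι)
    (m : ι → Measure α) {t : Set α} (h : ∀ i ∈ s, m i t ≠ ∞) :
    (∑ i ∈ s, m i).real t = ∑ i ∈ s, (m i).real t := by
  simp only [measureReal_def, Measure.finsetSum_apply, ENNReal.toReal_sum h]

theorem measureReal_smul_add_smul_apply {α : Type*} [MeasurableSpace α] (μ ν : Measure α)
    [IsFiniteMeasure μ] [IsFiniteMeasure ν] {a b : ℝ≥0∞} (ha : a ≠ ∞) (hb : b ≠ ∞) (s : Set α) :
    (a • μ + b • ν).real s = a.toReal * μ.real s + b.toReal * ν.real s := by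
  rw [measureReal_add_apply (by simp [ENNReal.mul_ne_top, ha]) (by simp [ENNReal.mul_ne_top, hb]),
    measureReal_ennreal_smul_apply, measureReal_ennreal_smul_apply]

theorem abs_convPow1_real_Iic_sub_le {μ ν : Measure ℝ} [IsProbabilityMeasure μ]
    [IsProbabilityMeasure ν] (hμ : μ (Ioi 0) = 0) (hν : ν (Iio 0) = 0) {q : ℝ} (hq0 : 0 ≤ q)
    (hq1 : q ≤ 1) {n : ℕ} {B : ℝ} (hB : ∀ k, n.choose k * q ^ k * (1 - q) ^ (n - k) ≤ B)
    (x : ℝ) :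
    |(convPow1 (ENNReal.ofReal q • μ + ENNReal.ofReal (1 - q) • ν) n).real (Iic x) -
      (convPow1 (ENNReal.ofReal q • μ + ENNReal.ofReal (1 - q) • ν) (n + 1)).real (Iic x)| ≤ B := by
  rw [convPow1_succ, convPow1_smul_add_smul, sum_smul_conv_smul_add_smul,
    measureReal_finsetSum_apply _ _ fun _ _ => by
      simp only [Measure.smul_apply, smul_eq_mul]; finiteness,
    measureReal_finsetSum_apply _ _ fun _ _ => by
      simp only [Measure.smul_apply, Measure.add_apply, smul_eq_mul]; finiteness]
  simp only [measureReal_ennreal_smul_apply,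
    measureReal_smul_add_smul_apply _ _ ENNReal.ofReal_ne_top ENNReal.ofReal_ne_top,
    ENNReal.toReal_mul, ENNReal.toReal_pow, ENNReal.toReal_natCast, ENNReal.toReal_ofReal hq0,
    ENNReal.toReal_ofReal (sub_nonneg.2 hq1)]
  refine abs_sum_antidiagonal_mul_sub_le hq0 hq1 n (fun i j => n.choose i * q ^ i * (1 - q) ^ j)
    (fun i j => (convPow1 μ i ∗ convPow1 ν j).real (Iic x)) (fun i j => by positivity) ?_
    (fun i j => ?_) (fun i j => ?_) (fun i j => measureReal_nonneg) (fun i j => measureReal_le_one)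
  · rintro ⟨i, j⟩ hij
    obtain rfl : j = n - i := by rw [Finset.HasAntidiagonal.mem_antidiagonal] at hij; omega
    exact hB i
  · rw [← convPow1_conv_convPow1_conv_right]
    exact ENNReal.toReal_mono (measure_ne_top _ _)
      (Measure.conv_Iic_le_of_measure_Iio_eq_zero _ hν x)
  · rw [← convPow1_conv_convPow1_conv_left]
    exact ENNReal.toReal_mono (measure_ne_top _ _)
      (Measure.le_conv_Iic_of_measure_Ioi_eq_zero _ hμ x)

section Fourier

open Polynomial Complex

theorem coeff_C_mul_X_add_C_pow {R : Type*} [CommSemiring R] (a b : R) (n k : ℕ) :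
    ((C a * X + C b) ^ n).coeff k = n.choose k * a ^ k * b ^ (n - k) := by
  have hterm (m : ℕ) : (C a * X) ^ m * C b ^ (n - m) * (n.choose m : R[X]) =
      C (n.choose m * a ^ m * b ^ (n - m)) * X ^ m := by
    simp only [C_mul, C_pow, map_natCast]
    ring
  simp_rw [add_pow, finsetSum_coeff, hterm, coeff_C_mul_X_pow, Finset.sum_ite_eq,
    Finset.mem_range]
  split_ifs with hk
  · rfl
  · simp [Nat.choose_eq_zero_of_lt (not_lt.1 hk)]

theorem two_pi_mul_norm_coeff_le_integral (p : ℂ[X]) (k : ℕ) :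
    2 * π * ‖p.coeff k‖ ≤ ∫ t in -π..π, ‖p.eval (exp (t * I))‖ := by
  have : Fact (0 < 2 * π) := ⟨two_pi_pos⟩
  rw [← fourierCoeff_toAddCircle_natCast, fourierCoeff_eq_intervalIntegral _ _ (-π), norm_smul,
    show -π + 2 * π = π by ring, norm_of_nonneg (by positivity), ← mul_assoc,
    mul_one_div_cancel two_pi_pos.ne', one_mul]
  refine (intervalIntegral.norm_integral_le_integral_norm (by linarith [pi_pos])).trans_eq ?_
  refine intervalIntegral.integral_congr fun t _ => ?_
  simp [toAddCircle, AddCircle.toCircle_apply_mk, Circle.norm_coe]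

theorem norm_mul_exp_add_one_sub_le (q t : ℝ) :
    ‖(q : ℂ) * exp (t * I) + (1 - q : ℝ)‖ ≤ Real.exp (-(q * (1 - q)) * (1 - Real.cos t)) := by
  have hsq : ‖(q : ℂ) * exp (t * I) + (1 - q : ℝ)‖ ^ 2 =
      1 - 2 * (q * (1 - q)) * (1 - Real.cos t) := by
    rw [Complex.sq_norm, normSq_apply]
    simp [exp_ofReal_mul_I_re, exp_ofReal_mul_I_im]
    linear_combination q ^ 2 * Real.sin_sq_add_cos_sq t
  refine (sq_le_sq₀ (norm_nonneg _) (Real.exp_nonneg _)).1 ?_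
  rw [hsq, ← Real.exp_nat_mul, Nat.cast_ofNat]
  linarith [Real.add_one_le_exp (2 * (-(q * (1 - q)) * (1 - Real.cos t)))]

theorem norm_mul_exp_add_one_sub_pow_le {q : ℝ} (hq0 : 0 ≤ q) (hq1 : q ≤ 1) (n : ℕ) {t : ℝ}
    (ht : |t| ≤ π) :
    ‖(q : ℂ) * exp (t * I) + (1 - q : ℝ)‖ ^ n ≤
      Real.exp (-(2 * n * (q * (1 - q)) / π ^ 2) * t ^ 2) := by
  refine (pow_le_pow_left₀ (norm_nonneg _) (norm_mul_exp_add_one_sub_le q t) n).trans ?_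
  rw [← Real.exp_nat_mul, Real.exp_le_exp,
    show -(2 * n * (q * (1 - q)) / π ^ 2) * t ^ 2 = n * (q * (1 - q)) * -(2 / π ^ 2 * t ^ 2) by
      ring]
  have hcos := Real.cos_le_one_sub_mul_cos_sq ht
  have : 0 ≤ n * (q * (1 - q)) := mul_nonneg n.cast_nonneg (mul_nonneg hq0 (sub_nonneg.2 hq1))
  nlinarith

theorem intervalIntegral_exp_neg_mul_sq_le {a : ℝ} (ha : 0 < a) {u v : ℝ} (huv : u ≤ v) :
    ∫ t in u..v, Real.exp (-a * t ^ 2) ≤ √(π / a) := by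
  rw [intervalIntegral.integral_of_le huv, ← integral_gaussian a]
  exact setIntegral_le_integral (integrable_exp_neg_mul_sq ha)
    (.of_forall fun _ => (Real.exp_pos _).le)

theorem choose_mul_pow_mul_pow_le {q : ℝ} (hq0 : 0 < q) (hq1 : q < 1) {n : ℕ} (hn : 0 < n)
    (k : ℕ) : n.choose k * q ^ k * (1 - q) ^ (n - k) ≤ √(π / (8 * n * (q * (1 - q)))) := by
  have hn' : (0 : ℝ) < n := Nat.cast_pos.2 hn
  set a := 2 * n * (q * (1 - q)) / π ^ 2 with ha_def
  have ha : 0 < a := by positivity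
  have hcoeff : ‖((C (q : ℂ) * X + C ((1 - q : ℝ) : ℂ)) ^ n).coeff k‖ =
      n.choose k * q ^ k * (1 - q) ^ (n - k) := by
    rw [coeff_C_mul_X_add_C_pow]
    exact_mod_cast Real.norm_of_nonneg (by positivity)
  have hsqrt : √(π / a) = 2 * π * √(π / (8 * n * (q * (1 - q)))) := by
    rw [show π / a = (2 * π) ^ 2 * (π / (8 * n * (q * (1 - q)))) by
        rw [ha_def]; field_simp; ring,
      Real.sqrt_mul (by positivity), Real.sqrt_sq (by positivity)]
  have key : 2 * π * (n.choose k * q ^ k * (1 - q) ^ (n - k)) ≤ √(π / a) :=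
    calc _ = 2 * π * ‖((C (q : ℂ) * X + C ((1 - q : ℝ) : ℂ)) ^ n).coeff k‖ := by rw [hcoeff]
      _ ≤ ∫ t in -π..π, ‖((C (q : ℂ) * X + C ((1 - q : ℝ) : ℂ)) ^ n).eval (exp (t * I))‖ :=
        two_pi_mul_norm_coeff_le_integral _ k
      _ ≤ ∫ t in -π..π, Real.exp (-a * t ^ 2) := by
        refine intervalIntegral.integral_mono_on (by linarith [pi_pos])
          ((by fun_prop : Continuous _).intervalIntegrable _ _)
          ((by fun_prop : Continuous _).intervalIntegrable _ _) fun t ht => ?_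
        simpa using norm_mul_exp_add_one_sub_pow_le hq0.le hq1.le n (abs_le.2 ht)
      _ ≤ √(π / a) := intervalIntegral_exp_neg_mul_sq_le ha (by linarith [pi_pos])
  rw [hsqrt] at key
  exact le_of_mul_le_mul_left key (by positivity)

end Fourier

theorem exists_isProbabilityMeasure_smul_eq {α : Type*} [MeasurableSpace α] (m : Measure α)
    {c : ℝ≥0∞} (hm : m univ = c) (hc0 : c ≠ 0) (hc : c ≠ ∞) :
    ∃ μ : Measure α, IsProbabilityMeasure μ ∧ μ ≪ m ∧ c • μ = m :=
  ⟨c⁻¹ • m, ⟨by rw [Measure.smul_apply, hm, smul_eq_mul, ENNReal.inv_mul_cancel hc0 hc]⟩,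
    Measure.smul_absolutelyContinuous, by rw [smul_smul, ENNReal.mul_inv_cancel hc0 hc, one_smul]⟩

theorem restrict_Iio_add_restrict_singleton_add_restrict_Ioi (F : Measure ℝ) (a : ℝ) :
    F.restrict (Iio a) + F {a} • Measure.dirac a + F.restrict (Ioi a) = F := by
  rw [← Measure.restrict_singleton, ← Measure.restrict_union (by simp) (measurableSet_singleton a),
    Iio_union_right, ← Measure.restrict_union (Iic_disjoint_Ioi le_rfl) measurableSet_Ioi,
    Iic_union_Ioi, Measure.restrict_univ]

theorem exists_eq_smul_add_smul_of_quantile (F : Measure ℝ) [IsProbabilityMeasure F] {q : ℝ}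
    (hq0 : 0 < q) (hq1 : q < 1) (hlo : F.real (Iio 0) ≤ q) (hhi : F.real (Ioi 0) ≤ 1 - q) :
    ∃ μ ν : Measure ℝ, IsProbabilityMeasure μ ∧ IsProbabilityMeasure ν ∧
      μ (Ioi 0) = 0 ∧ ν (Iio 0) = 0 ∧ F = ENNReal.ofReal q • μ + ENNReal.ofReal (1 - q) • ν := by
  set Q := ENNReal.ofReal q
  set Q' := ENNReal.ofReal (1 - q)
  have hQQ' : Q + Q' = 1 := by
    rw [← ENNReal.ofReal_add hq0.le (sub_nonneg.2 hq1.le), add_sub_cancel, ENNReal.ofReal_one]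
  have hlo' : F (Iio 0) ≤ Q := (ENNReal.le_ofReal_iff_toReal_le (measure_ne_top _ _) hq0.le).2 hlo
  have hhi' : F (Ioi 0) ≤ Q' :=
    (ENNReal.le_ofReal_iff_toReal_le (measure_ne_top _ _) (sub_nonneg.2 hq1.le)).2 hhi
  set r := Q - F (Iio 0)
  set s := Q' - F (Ioi 0)
  have hF := restrict_Iio_add_restrict_singleton_add_restrict_Ioi F 0
  have hrs : F {0} = r + s := by
    have h := congrArg (· univ) hF
    simp only [Measure.add_apply, Measure.restrict_apply_univ, Measure.smul_apply,
      measure_univ, smul_eq_mul, Measure.dirac_apply_of_mem (mem_univ _), mul_one] at h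
    rw [← hQQ', ← add_tsub_cancel_of_le hlo', ← add_tsub_cancel_of_le hhi'] at h
    have h' : F (Iio 0) + F (Ioi 0) + F {0} = F (Iio 0) + F (Ioi 0) + (r + s) := by
      rw [add_right_comm, h]
      ring
    exact (ENNReal.add_right_inj (by finiteness)).1 h'
  obtain ⟨μ, hμ, hμα, hQμ⟩ := exists_isProbabilityMeasure_smul_eq
    (F.restrict (Iio 0) + r • Measure.dirac 0) (c := Q) (by simpa using add_tsub_cancel_of_le hlo')
    (by simpa [Q] using hq0) ENNReal.ofReal_ne_top
  obtain ⟨ν, hν, hνβ, hQ'ν⟩ := exists_isProbabilityMeasure_smul_eq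
    (F.restrict (Ioi 0) + s • Measure.dirac 0) (c := Q') (by simpa using add_tsub_cancel_of_le hhi')
    (by simpa [Q'] using hq1) ENNReal.ofReal_ne_top
  refine ⟨μ, ν, hμ, hν, hμα (by simp [Ioi_inter_Iio]), hνβ (by simp [Iio_inter_Ioi]), ?_⟩
  rw [hQμ, hQ'ν]
  conv_lhs => rw [← hF, hrs, add_smul]
  abel

theorem sqrt_pi_div_le_one_div_sqrt_mul_min {q : ℝ} (hq0 : 0 < q) (hq1 : q < 1) {n : ℝ}
    (hn : 0 < n) : √(π / (8 * n * (q * (1 - q)))) ≤ 1 / √(n * min q (1 - q)) := by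
  have hm : min q (1 - q) ≤ 2 * (q * (1 - q)) := by
    rcases le_total q (1 - q) with h | h
    · rw [min_eq_left h]; nlinarith
    · rw [min_eq_right h]; nlinarith
  have hm0 : 0 < min q (1 - q) := lt_min hq0 (sub_pos.2 hq1)
  rw [one_div, ← Real.sqrt_inv]
  refine Real.sqrt_le_sqrt ?_
  rw [div_le_iff₀ (by positivity), inv_mul_eq_div, le_div_iff₀ (by positivity)]
  nlinarith [pi_le_four, mul_le_mul_of_nonneg_left hm hn.le, pi_pos, mul_pos hn hm0]

/-- If 0 is a q-quantile of F, then ρ(F^n, F^{n+1}) ≤ c/√(n·min{q,1-q}) with an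
absolute constant c. -/
theorem statement9 :
    ∃ c : ℝ, 0 < c ∧ ∀ (F : Measure ℝ), IsProbabilityMeasure F → ∀ q : ℝ, 0 < q → q < 1 →
      (F (Set.Iio 0)).toReal ≤ q → (F (Set.Ioi 0)).toReal ≤ 1 - q →
      ∀ n : ℕ, 0 < n →
        kolm (convPow1 F n) (convPow1 F (n + 1)) ≤ c / Real.sqrt (n * min q (1 - q)) := by
  refine ⟨1, one_pos, fun F _ q hq0 hq1 hlo hhi n hn => ?_⟩
  obtain ⟨μ, ν, _, _, hμ, hν, rfl⟩ := exists_eq_smul_add_smul_of_quantile F hq0 hq1 hlo hhi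
  refine ciSup_le fun x => ?_
  calc _ ≤ √(π / (8 * n * (q * (1 - q)))) :=
        abs_convPow1_real_Iic_sub_le hμ hν hq0.le hq1.le (choose_mul_pow_mul_pow_le hq0 hq1 hn) x
    _ ≤ 1 / √(n * min q (1 - q)) := sqrt_pi_div_le_one_div_sqrt_mul_min hq0 hq1 (by positivity)
end

section
/- For arbitrary Borel probability measures F, G, H on R^d, the Prokhorov distance satisfies π(F*H, G*H) ≤ π(F, G), where * denotes convolution of measures. -/
open MeasureTheory ProbabilityTheory Metric

/-- n-fold convolution power of a measure on ℝ^d (0-th power is the Dirac measure at 0). -/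
noncomputable def convPow {d : ℕ} (F : Measure (EuclideanSpace ℝ (Fin d))) :
    ℕ → Measure (EuclideanSpace ℝ (Fin d))
  | 0 => Measure.dirac 0
  | (n + 1) => (convPow F n).conv F

/-- Prokhorov distance between measures on ℝ^d (`thickening ε A` is the open
ε-neighborhood of `A`). -/
noncomputable def prokhorov {d : ℕ} (G H : Measure (EuclideanSpace ℝ (Fin d))) : ℝ :=
  sInf {ε : ℝ | 0 < ε ∧ ∀ A : Set (EuclideanSpace ℝ (Fin d)), MeasurableSet A →
    (G A).toReal ≤ (H (thickening ε A)).toReal + ε ∧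
    (H A).toReal ≤ (G (thickening ε A)).toReal + ε}

section Aux

variable {d : ℕ}

local notation "E" => EuclideanSpace ℝ (Fin d)

lemma conv_apply_aux (F H : Measure E) [SFinite F] [SFinite H] {S : Set E}
    (hS : MeasurableSet S) :
    (F.conv H) S = ∫⁻ y, F ((y + ·) ⁻¹' S) ∂H := by
  rw [Measure.conv_comm]
  rw [Measure.conv, Measure.map_apply (by fun_prop) hS, Measure.prod_apply (by
    exact (measurable_add hS : MeasurableSet ((fun p : E × E => p.1 + p.2) ⁻¹' S)))]
  rfl

lemma thickening_preimage_add (y : E) (ε : ℝ) (A : Set E) :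
    thickening ε ((y + ·) ⁻¹' A) = (y + ·) ⁻¹' (thickening ε A) := by
  have hset : (y + ·) ⁻¹' A = (fun z : E => -y + z) '' A := by
    ext a
    simp only [Set.mem_preimage, Set.mem_image]
    constructor
    · intro h; exact ⟨y + a, h, by abel⟩
    · rintro ⟨b, hb, rfl⟩; simpa [← add_assoc] using hb
  have hiso : Isometry (fun z : E => -y + z) :=
    Isometry.of_dist_eq fun a b => by simp [dist_add_left]
  ext x
  simp only [Metric.mem_thickening_iff_infEdist_lt, Set.mem_preimage, hset]
  have h3 := EMetric.infEdist_image (x := y + x) (t := A) hiso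
  rw [neg_add_cancel_left] at h3
  rw [h3]

lemma key_step (F G H : Measure E) [IsProbabilityMeasure F] [IsProbabilityMeasure G]
    [IsProbabilityMeasure H] {ε : ℝ} (hε : 0 < ε)
    (h : ∀ A : Set E, MeasurableSet A →
      (F A).toReal ≤ (G (thickening ε A)).toReal + ε)
    (A : Set E) (hA : MeasurableSet A) :
    ((F.conv H) A).toReal ≤ ((G.conv H) (thickening ε A)).toReal + ε := by
  have hT : MeasurableSet (thickening ε A) := isOpen_thickening.measurableSet
  have hbound : (F.conv H) A ≤ (G.conv H) (thickening ε A) + ENNReal.ofReal ε := by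
    rw [conv_apply_aux F H hA, conv_apply_aux G H hT]
    have hle : ∀ y : E, F ((y + ·) ⁻¹' A)
        ≤ G ((y + ·) ⁻¹' (thickening ε A)) + ENNReal.ofReal ε := by
      intro y
      have hmeas : MeasurableSet ((y + ·) ⁻¹' A) := hA.preimage (by fun_prop)
      have h1 := h _ hmeas
      rw [thickening_preimage_add] at h1
      have h2 := ENNReal.ofReal_le_ofReal h1
      rwa [ENNReal.ofReal_toReal (measure_ne_top _ _),
        ENNReal.ofReal_add ENNReal.toReal_nonneg hε.le,
        ENNReal.ofReal_toReal (measure_ne_top _ _)] at h2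
    calc ∫⁻ y, F ((y + ·) ⁻¹' A) ∂H
        ≤ ∫⁻ y, (G ((y + ·) ⁻¹' (thickening ε A)) + ENNReal.ofReal ε) ∂H :=
          lintegral_mono hle
      _ = ∫⁻ y, G ((y + ·) ⁻¹' (thickening ε A)) ∂H + ENNReal.ofReal ε := by
          rw [lintegral_add_right _ measurable_const, lintegral_const, measure_univ, mul_one]
  have hfin : (G.conv H) (thickening ε A) + ENNReal.ofReal ε ≠ ⊤ :=
    ENNReal.add_ne_top.mpr ⟨measure_ne_top _ _, ENNReal.ofReal_ne_top⟩
  have := ENNReal.toReal_mono hfin hbound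
  rwa [ENNReal.toReal_add (measure_ne_top _ _) ENNReal.ofReal_ne_top,
    ENNReal.toReal_ofReal hε.le] at this

end Aux

/-- π(F*H, G*H) ≤ π(F, G) for probability measures on ℝ^d. -/
theorem statement13 {d : ℕ} (F G H : Measure (EuclideanSpace ℝ (Fin d)))
    [IsProbabilityMeasure F] [IsProbabilityMeasure G] [IsProbabilityMeasure H] :
    prokhorov (F.conv H) (G.conv H) ≤ prokhorov F G := by
  unfold prokhorov
  apply csInf_le_csInf
  · exact ⟨0, fun x hx => hx.1.le⟩
  · refine ⟨2, by norm_num, fun A hA => ⟨?_, ?_⟩⟩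
    · have h1 := ENNReal.toReal_mono (measure_ne_top F Set.univ)
        (measure_mono (Set.subset_univ A))
      rw [measure_univ, ENNReal.toReal_one] at h1
      linarith [(ENNReal.toReal_nonneg : (0:ℝ) ≤ (G (thickening 2 A)).toReal)]
    · have h1 := ENNReal.toReal_mono (measure_ne_top G Set.univ)
        (measure_mono (Set.subset_univ A))
      rw [measure_univ, ENNReal.toReal_one] at h1
      linarith [(ENNReal.toReal_nonneg : (0:ℝ) ≤ (F (thickening 2 A)).toReal)]
  · rintro ε ⟨hε, hcond⟩
    refine ⟨hε, fun A hA => ?_⟩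
    constructor
    · exact key_step F G H hε (fun B hB => (hcond B hB).1) A hA
    · exact key_step G F H hε (fun B hB => (hcond B hB).2) A hA
end
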